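/- Let n ≥ 1 be an integer, let ν ≥ 0 be real, let σ ∈ (0,1) and let κ > 0. Then there exists a constant C > 0 such that for all t > 0 and a ≥ 0 with t + a ≤ κ, one has t^{2σ} · ∫_0^1 s^{−n/2 − 1 − σ} · exp(−(t² + a²)/(4s)) ds + t^{2σ} · ∫_1^∞ s^{−ν/2 − 1 − σ} ds ≤ C · t^{2σ} · (t + a)^{−(n + 2σ)}. -/

import Mathlib

open MeasureTheory

private lemma key_pointwise {q b : ℝ} (hb : 0 < b) {x : ℝ} (hx : (0:ℝ) < x) :
    x ^ (-q - 1) * Real.exp (-b / x)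
      = (|(-1:ℝ)| * x ^ ((-1:ℝ) - 1)) •
          ((x ^ (-1:ℝ)) ^ (q - 1) * Real.exp (-(b * x ^ (-1:ℝ)))) := by
  rw [smul_eq_mul, ← Real.rpow_mul hx.le, show |(-1:ℝ)| = 1 by norm_num, one_mul,
    ← mul_assoc, ← Real.rpow_add hx, Real.rpow_neg_one,
    show (-1:ℝ) - 1 + -1 * (q - 1) = -q - 1 by ring,
    show -(b * x⁻¹) = -b / x by rw [neg_div, div_eq_mul_inv]]

private lemma key_integrable {q b : ℝ} (hq : 0 < q) (hb : 0 < b) :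
    IntegrableOn (fun s : ℝ => s ^ (-q - 1) * Real.exp (-b / s)) (Set.Ioi 0) := by
  have hg : IntegrableOn (fun y : ℝ => y ^ (q - 1) * Real.exp (-(b * y))) (Set.Ioi 0) := by
    have h := integrableOn_rpow_mul_exp_neg_mul_rpow (p := 1) (s := q - 1) (b := b)
      (by linarith) one_pos hb
    refine h.congr_fun (fun x hx => ?_) measurableSet_Ioi
    simp [Real.rpow_one]
  have hderiv : ∀ x ∈ Set.Ioi (0:ℝ), HasDerivWithinAt (fun t : ℝ => t ^ (-1:ℝ))
      ((-1) * x ^ ((-1:ℝ) - 1)) (Set.Ioi 0) x := fun x hx =>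
    (Real.hasDerivAt_rpow_const (Or.inl (ne_of_gt hx))).hasDerivWithinAt
  have hinj : Set.InjOn (fun t : ℝ => t ^ (-1:ℝ)) (Set.Ioi 0) := by
    intro x hx y hy hxy
    simp only [Real.rpow_neg_one] at hxy
    exact inv_injective hxy
  have himg : (fun t : ℝ => t ^ (-1:ℝ)) '' Set.Ioi 0 = Set.Ioi 0 := by
    ext x
    constructor
    · rintro ⟨y, hy, rfl⟩; exact Real.rpow_pos_of_pos hy _
    · intro hx; exact ⟨x⁻¹, Set.mem_Ioi.mpr (inv_pos.mpr hx), by simp [Real.rpow_neg_one]⟩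
  have hiff := integrableOn_image_iff_integrableOn_abs_deriv_smul measurableSet_Ioi hderiv hinj
    (fun y : ℝ => y ^ (q - 1) * Real.exp (-(b * y)))
  rw [himg] at hiff
  have h2 := hiff.mp hg
  refine h2.congr_fun (fun x hx => ?_) measurableSet_Ioi
  have habs : |(-1 : ℝ) * x ^ ((-1:ℝ) - 1)| = |(-1:ℝ)| * x ^ ((-1:ℝ) - 1) := by
    rw [abs_mul, abs_of_nonneg (Real.rpow_nonneg (le_of_lt hx) _)]
  beta_reduce
  rw [habs]
  exact (key_pointwise (q := q) hb hx).symm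

private lemma key_eq {q b : ℝ} (hq : 0 < q) (hb : 0 < b) :
    ∫ s in Set.Ioi (0:ℝ), s ^ (-q - 1) * Real.exp (-b / s) = Real.Gamma q * b ^ (-q) := by
  calc ∫ s in Set.Ioi (0:ℝ), s ^ (-q - 1) * Real.exp (-b / s)
      = ∫ x in Set.Ioi (0:ℝ), (|(-1:ℝ)| * x ^ ((-1:ℝ) - 1)) •
          ((x ^ (-1:ℝ)) ^ (q - 1) * Real.exp (-(b * x ^ (-1:ℝ)))) :=
        setIntegral_congr_fun measurableSet_Ioi (fun x hx => key_pointwise hb hx)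
    _ = ∫ y in Set.Ioi (0:ℝ), y ^ (q - 1) * Real.exp (-(b * y)) :=
        integral_comp_rpow_Ioi (fun y : ℝ => y ^ (q - 1) * Real.exp (-(b * y))) (p := -1) (by norm_num)
    _ = (1 / b) ^ q * Real.Gamma q := Real.integral_rpow_mul_exp_neg_mul_Ioi hq hb
    _ = Real.Gamma q * b ^ (-q) := by
        rw [one_div, Real.inv_rpow hb.le, ← Real.rpow_neg hb.le, mul_comm]

/-- Small-argument upper bound for the fractional Poisson kernel: for an integer `n ≥ 1`,
real `ν ≥ 0`, `σ ∈ (0,1)` and `κ > 0`, there is `C > 0` such that for all `t > 0` and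
`a ≥ 0` with `t + a ≤ κ`,
`t^{2σ} ∫_0^1 s^{−n/2−1−σ} e^{−(t²+a²)/(4s)} ds + t^{2σ} ∫_1^∞ s^{−ν/2−1−σ} ds
  ≤ C t^{2σ} (t+a)^{−(n+2σ)}`. -/
theorem fractional_poisson_small_upper (n : ℕ) (hn : 1 ≤ n) (ν σ κ : ℝ) (hν : 0 ≤ ν)
    (hσ : σ ∈ Set.Ioo (0 : ℝ) 1) (hκ : 0 < κ) :
    ∃ C : ℝ, 0 < C ∧ ∀ t a : ℝ, 0 < t → 0 ≤ a → t + a ≤ κ →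
      t ^ (2 * σ) *
            (∫ s in Set.Ioo (0 : ℝ) 1,
              s ^ (-(n : ℝ) / 2 - 1 - σ) * Real.exp (-(t ^ 2 + a ^ 2) / (4 * s))) +
          t ^ (2 * σ) * ∫ s in Set.Ioi (1 : ℝ), s ^ (-ν / 2 - 1 - σ) ≤
        C * (t ^ (2 * σ) * (t + a) ^ (-((n : ℝ) + 2 * σ))) := by
  obtain ⟨hσ0, hσ1⟩ := hσ
  have hn' : (1:ℝ) ≤ (n:ℝ) := by exact_mod_cast hn
  set q : ℝ := (n:ℝ) / 2 + σ with hqdef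
  have hq : 0 < q := by positivity
  have hKpos : 0 < ν / 2 + σ := by linarith
  set K : ℝ := (ν / 2 + σ)⁻¹ with hKdef
  have hK0 : 0 < K := inv_pos.mpr hKpos
  have hΓ : 0 < Real.Gamma q := Real.Gamma_pos_of_pos hq
  refine ⟨Real.Gamma q * 8 ^ q + K * κ ^ ((n:ℝ) + 2*σ), by positivity, ?_⟩
  intro t a ht ha hta
  have hta0 : 0 < t + a := by linarith
  set P : ℝ := (t + a) ^ (-((n:ℝ) + 2*σ)) with hPdef
  have hP0 : 0 < P := Real.rpow_pos_of_pos hta0 _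
  have ht2σ : (0:ℝ) ≤ t ^ (2*σ) := (Real.rpow_pos_of_pos ht _).le
  set b : ℝ := (t^2 + a^2) / 4 with hbdef
  have hb : 0 < b := by positivity
  -- second integral
  have hI2 : ∫ s in Set.Ioi (1:ℝ), s ^ (-ν/2 - 1 - σ) = K := by
    rw [integral_Ioi_rpow_of_lt (by linarith) one_pos, Real.one_rpow, hKdef]
    rw [show -ν/2 - 1 - σ + 1 = -(ν/2 + σ) by ring, neg_div_neg_eq, one_div]
  -- first integral
  have hI1 : (∫ s in Set.Ioo (0:ℝ) 1,
      s ^ (-(n:ℝ)/2 - 1 - σ) * Real.exp (-(t^2 + a^2) / (4*s)))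
      ≤ Real.Gamma q * b ^ (-q) := by
    have hcongr : ∀ s ∈ Set.Ioo (0:ℝ) 1,
        s ^ (-(n:ℝ)/2 - 1 - σ) * Real.exp (-(t^2 + a^2) / (4*s))
          = s ^ (-q - 1) * Real.exp (-b / s) := by
      intro s hs
      have hs0 : (0:ℝ) < s := hs.1
      have e1 : -(n:ℝ)/2 - 1 - σ = -q - 1 := by rw [hqdef]; ring
      have e2 : -(t^2 + a^2) / (4*s) = -b / s := by
        rw [hbdef]; field_simp
      rw [e1, e2]
    rw [setIntegral_congr_fun measurableSet_Ioo hcongr]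
    calc (∫ s in Set.Ioo (0:ℝ) 1, s ^ (-q - 1) * Real.exp (-b / s))
        ≤ ∫ s in Set.Ioi (0:ℝ), s ^ (-q - 1) * Real.exp (-b / s) := by
          refine setIntegral_mono_set (key_integrable hq hb) ?_
            (HasSubset.Subset.eventuallyLE Set.Ioo_subset_Ioi_self)
          filter_upwards [ae_restrict_mem measurableSet_Ioi] with s hs
          have : (0:ℝ) < s := hs
          positivity
      _ = Real.Gamma q * b ^ (-q) := key_eq hq hb
  -- compare b^(-q) with P
  have hbP : b ^ (-q) ≤ 8 ^ q * P := by
    have h1 : ((t+a)^2/8 : ℝ) ≤ b := by rw [hbdef]; nlinarith [sq_nonneg (t - a)]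
    have h2 : (0:ℝ) < (t+a)^2/8 := by positivity
    have h3 := Real.rpow_le_rpow_of_nonpos h2 h1 (by linarith : -q ≤ 0)
    refine h3.trans_eq ?_
    rw [Real.div_rpow (by positivity) (by norm_num : (0:ℝ) ≤ 8),
      ← Real.rpow_natCast (t+a) 2, ← Real.rpow_mul hta0.le,
      show ((2:ℕ):ℝ) * (-q) = -((n:ℝ) + 2*σ) by rw [hqdef]; push_cast; ring,
      Real.rpow_neg (by norm_num : (0:ℝ) ≤ 8), div_eq_mul_inv, inv_inv, mul_comm]
  -- compare 1 with κ^(n+2σ) * P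
  have hPκ : 1 ≤ κ ^ ((n:ℝ) + 2*σ) * P := by
    have h5 : κ ^ (-((n:ℝ) + 2*σ)) ≤ P :=
      Real.rpow_le_rpow_of_nonpos hta0 hta (by linarith)
    calc (1:ℝ) = κ ^ ((n:ℝ) + 2*σ) * κ ^ (-((n:ℝ) + 2*σ)) := by
          rw [← Real.rpow_add hκ, show (n:ℝ) + 2*σ + -((n:ℝ) + 2*σ) = 0 by ring, Real.rpow_zero]
      _ ≤ κ ^ ((n:ℝ) + 2*σ) * P :=
          mul_le_mul_of_nonneg_left h5 (Real.rpow_pos_of_pos hκ _).le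
  -- assemble
  rw [hI2]
  calc t ^ (2*σ) * (∫ s in Set.Ioo (0:ℝ) 1,
        s ^ (-(n:ℝ)/2 - 1 - σ) * Real.exp (-(t^2 + a^2) / (4*s))) + t ^ (2*σ) * K
      ≤ t ^ (2*σ) * (Real.Gamma q * (8 ^ q * P)) + t ^ (2*σ) * (K * (κ ^ ((n:ℝ) + 2*σ) * P)) := by
        have hA : t ^ (2*σ) * (∫ s in Set.Ioo (0:ℝ) 1,
            s ^ (-(n:ℝ)/2 - 1 - σ) * Real.exp (-(t^2 + a^2) / (4*s)))
              ≤ t ^ (2*σ) * (Real.Gamma q * (8 ^ q * P)) := by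
          refine mul_le_mul_of_nonneg_left (hI1.trans ?_) ht2σ
          exact mul_le_mul_of_nonneg_left hbP hΓ.le
        have hB : t ^ (2*σ) * K ≤ t ^ (2*σ) * (K * (κ ^ ((n:ℝ) + 2*σ) * P)) := by
          refine mul_le_mul_of_nonneg_left ?_ ht2σ
          nlinarith [hK0, hPκ]
        linarith
    _ = (Real.Gamma q * 8 ^ q + K * κ ^ ((n:ℝ) + 2*σ)) * (t ^ (2*σ) * P) := by ring
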